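/- arXiv:0909.2824 — 4 statements merged into one kernel-verified Lean document; each statement's English description precedes it below -/
import Mathlib

section
/- In a free group, two elements commute if and only if they are both powers of a common element. -/
open Subgroup

private lemma freeGroup_of_not_comm {ι : Type*} {x y : ι} (hxy : x ≠ y) :
    FreeGroup.of x * FreeGroup.of y ≠ FreeGroup.of y * FreeGroup.of x := by
  classical
  intro h
  have hne : (Equiv.swap (0 : Fin 3) 1) * (Equiv.swap (1 : Fin 3) 2) ≠
      (Equiv.swap (1 : Fin 3) 2) * (Equiv.swap (0 : Fin 3) 1) := by decide
  set f : ι → Equiv.Perm (Fin 3) := fun i =>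
    if i = x then Equiv.swap 0 1 else Equiv.swap 1 2 with hf
  have := congrArg (FreeGroup.lift f) h
  simp only [map_mul, FreeGroup.lift_apply_of, hf, if_pos rfl, if_neg (Ne.symm hxy)] at this
  exact hne this

private lemma freeGroup_cyclic_of_comm {ι : Type*}
    (hcomm : ∀ a b : FreeGroup ι, a * b = b * a) (a b : FreeGroup ι) :
    ∃ (γ : FreeGroup ι) (k l : ℤ), a = γ ^ k ∧ b = γ ^ l := by
  have hsub : Subsingleton ι := by
    constructor
    intro x y
    by_contra hxy
    exact freeGroup_of_not_comm hxy (hcomm _ _)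
  rcases isEmpty_or_nonempty ι with hι | ⟨⟨i₀⟩⟩
  · have htop : (⊤ : Subgroup (FreeGroup ι)) = ⊥ := by
      rw [← FreeGroup.closure_range_of, Set.range_eq_empty, Subgroup.closure_empty]
    have ha : a = 1 := by
      have := mem_top a; rw [htop, mem_bot] at this; exact this
    have hb : b = 1 := by
      have := mem_top b; rw [htop, mem_bot] at this; exact this
    exact ⟨1, 0, 0, by simp [ha], by simp [hb]⟩
  · have hrange : Set.range (FreeGroup.of : ι → FreeGroup ι) = {FreeGroup.of i₀} := by
      ext z
      constructor
      · rintro ⟨i, rfl⟩; rw [Subsingleton.elim i i₀]; rfl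
      · rintro rfl; exact ⟨i₀, rfl⟩
    have htop : (⊤ : Subgroup (FreeGroup ι)) = closure {FreeGroup.of i₀} := by
      rw [← FreeGroup.closure_range_of, hrange]
    have ha : a ∈ closure ({FreeGroup.of i₀} : Set (FreeGroup ι)) := by
      rw [← htop]; exact mem_top a
    have hb : b ∈ closure ({FreeGroup.of i₀} : Set (FreeGroup ι)) := by
      rw [← htop]; exact mem_top b
    rw [mem_closure_singleton] at ha hb
    obtain ⟨k, hk⟩ := ha
    obtain ⟨l, hl⟩ := hb
    exact ⟨FreeGroup.of i₀, k, l, hk.symm, hl.symm⟩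

/-- In a free group, two elements commute if and only if they are both powers
of a common element. -/
theorem freeGroup_commute_iff_powers_of_common_element (α : Type*)
    (g h : FreeGroup α) :
    Commute g h ↔ ∃ (γ : FreeGroup α) (k l : ℤ), g = γ ^ k ∧ h = γ ^ l := by
  constructor
  · intro hc
    set S : Subgroup (FreeGroup α) := closure {g, h} with hS
    have hgh : ∀ x ∈ ({g, h} : Set (FreeGroup α)), ∀ y ∈ ({g, h} : Set (FreeGroup α)),
        x * y = y * x := by
      rintro x (rfl | rfl) y (rfl | rfl) <;>
        first | rfl | exact hc | exact hc.symm
    letI : CommGroup S := closureCommGroupOfComm hgh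
    have hScomm : ∀ a b : S, a * b = b * a := mul_comm
    haveI : IsFreeGroup S := inferInstance
    let e : S ≃* FreeGroup (IsFreeGroup.Generators S) := IsFreeGroup.toFreeGroup S
    have hcommF : ∀ a b : FreeGroup (IsFreeGroup.Generators S), a * b = b * a := by
      intro a b
      have := congrArg e (hScomm (e.symm a) (e.symm b))
      simpa using this
    have hgS : g ∈ S := subset_closure (by simp)
    have hhS : h ∈ S := subset_closure (by simp)
    obtain ⟨γ, k, l, hk, hl⟩ := freeGroup_cyclic_of_comm hcommF (e ⟨g, hgS⟩) (e ⟨h, hhS⟩)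
    refine ⟨(e.symm γ : S), k, l, ?_, ?_⟩
    · have : (⟨g, hgS⟩ : S) = (e.symm γ) ^ k := by
        have := congrArg e.symm hk
        simpa [map_zpow] using this
      have := congrArg (Subtype.val) this
      simpa using this
    · have : (⟨h, hhS⟩ : S) = (e.symm γ) ^ l := by
        have := congrArg e.symm hl
        simpa [map_zpow] using this
      have := congrArg (Subtype.val) this
      simpa using this
  · rintro ⟨γ, k, l, rfl, rfl⟩
    exact (Commute.refl γ).zpow_zpow k l
end

section
/- Let F be the free group on generators α_1,…,α_n,β, let B = ⟨β⟩ be the cyclic subgroup generated by β, and let c = γλ be a reduced word with γ ∈ F ∖ B and λ ∈ B. If w ∈ F conjugates c to a reduced word of the form γλ' with λ' ∈ B (i.e. w⁻¹cw = γλ'), then λ = λ' and w commutes with c. -/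
/-- Let `F` be the free group on generators `α_1,…,α_n, β` (modelled on `Option (Fin n)`,
with `β` the generator `none`), and `B = ⟨β⟩`. If `c = γλ` is a reduced word with
`γ ∈ F ∖ B`, `λ ∈ B`, and `w⁻¹ c w = γλ'` is a reduced word with `λ' ∈ B`, then
`λ = λ'` and `w` commutes with `c`. -/
theorem conj_with_same_gamma_implies_commute (n : ℕ)
    (γ lam lam' w : FreeGroup (Option (Fin n)))
    (hγ : γ ∉ Subgroup.zpowers (FreeGroup.of (none : Option (Fin n))))
    (hlam : lam ∈ Subgroup.zpowers (FreeGroup.of (none : Option (Fin n))))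
    (hlam' : lam' ∈ Subgroup.zpowers (FreeGroup.of (none : Option (Fin n))))
    (hred : (γ * lam).toWord = γ.toWord ++ lam.toWord)
    (hred' : (γ * lam').toWord = γ.toWord ++ lam'.toWord)
    (hconj : w⁻¹ * (γ * lam) * w = γ * lam') :
    lam = lam' ∧ Commute w (γ * lam) := by
  obtain ⟨k, hk⟩ := hlam
  obtain ⟨m, hm⟩ := hlam'
  -- exponent-sum homomorphism counting occurrences of β
  set f : FreeGroup (Option (Fin n)) →* Multiplicative ℤ :=
    FreeGroup.lift (fun o : Option (Fin n) =>
      o.elim (Multiplicative.ofAdd (1 : ℤ)) fun _ => (1 : Multiplicative ℤ)) with hf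
  have hfeq : f (γ * lam) = f (γ * lam') := by
    have := congrArg f hconj
    simpa [mul_comm, mul_assoc, mul_left_comm] using this
  have hflam : f lam = f lam' := by
    have : f γ * f lam = f γ * f lam' := by simpa using hfeq
    exact mul_left_cancel this
  have hfof : f (FreeGroup.of (none : Option (Fin n))) = Multiplicative.ofAdd (1 : ℤ) := by
    simp [hf]
  have hkm : k = m := by
    rw [← hk, ← hm, map_zpow, map_zpow, hfof] at hflam
    simpa [← ofAdd_zsmul, smul_eq_mul] using hflam
  have hll : lam = lam' := by rw [← hk, ← hm, hkm]
  refine ⟨hll, ?_⟩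
  have : w⁻¹ * (γ * lam) * w = γ * lam := by rw [hconj, hll]
  have h2 : (γ * lam) * w = w * (γ * lam) := by
    calc (γ * lam) * w = w * (w⁻¹ * (γ * lam) * w) := by group
    _ = w * (γ * lam) := by rw [this]
  exact h2.symm
end

section
/- Let F be the free group on generators α_1,…,α_n,β and B = ⟨β⟩. If c = γλ is a reduced word with γ ∈ F ∖ B and λ ∈ B, then c is not conjugate in F to any reduced word of the form γ⁻¹λ' with λ' ∈ B. -/
/-!
Write `γ = β^i u β^j` with `u` a nonempty reduced word whose first and last letters are not
`β^{±1}`. Then `γλ` and `γ⁻¹λ'` are conjugate to `x = u β^s` and `y = u⁻¹ β^t`, whose words are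
`u β^s` and `u⁻¹ β^t` exactly, and cyclically reduced as soon as the exponent is nonzero.
Conjugate cyclically reduced words are rotations of each other, and a cyclic reduction never
increases length, so `|s| = |t|`. If `t = -s`, then `y` is conjugate to `x⁻¹`, which is impossible
since a nontrivial element of a free group is never conjugate to its inverse. If `t = s ≠ 0`, then
`u⁻¹ β^s` would be a rotation of `u β^s`, and comparing first letters shows that it is not.
-/

open List FreeGroup

namespace FreeGroup

variable {α : Type*} {L u : List (α × Bool)}

theorem isReduced_invRev (h : IsReduced L) : IsReduced (invRev L) := by
  rw [IsReduced, invRev, isChain_reverse, isChain_map]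
  exact h.imp fun a b hab hba => by simp [hab hba.symm]

theorem head?_invRev : (invRev L).head? = L.getLast?.map fun a => (a.1, !a.2) := by
  simp [invRev, head?_reverse, getLast?_map]

theorem getLast?_invRev : (invRev L).getLast? = L.head?.map fun a => (a.1, !a.2) := by
  simp [invRev, getLast?_reverse, head?_map]

theorem IsCyclicallyReduced.invRev (h : IsCyclicallyReduced L) :
    IsCyclicallyReduced (invRev L) := by
  refine ⟨isReduced_invRev h.isReduced, ?_⟩
  simp only [getLast?_invRev, head?_invRev, Option.mem_map, forall_exists_index, and_imp,
    forall_apply_eq_imp_iff₂]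
  exact fun a ha c hc hac => by simpa using (h.2 c hc a ha hac.symm).symm

theorem isCyclicallyReduced_cons_iff {a : α × Bool} :
    IsCyclicallyReduced (a :: L) ↔ IsCyclicallyReduced (L ++ [a]) := by
  rcases L with _ | ⟨c, L⟩
  · simp
  rcases L.eq_nil_or_concat' with rfl | ⟨M, z, rfl⟩
  · simp [isCyclicallyReduced_iff, and_comm]
  have hcons : IsReduced (a :: c :: M ++ [z]) ↔
      (a.1 = c.1 → a.2 = c.2) ∧ IsReduced (c :: M ++ [z]) := by
    simp [IsReduced]
  have hsnoc : IsReduced (c :: (M ++ [z]) ++ [a]) ↔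
      IsReduced (c :: M ++ [z]) ∧ (z.1 = a.1 → z.2 = a.2) := by
    simp [IsReduced]
  rw [← cons_append, ← cons_append, isCyclicallyReduced_cons_append_iff, cons_append (a := c),
    isCyclicallyReduced_cons_append_iff, hsnoc, hcons]
  tauto

theorem eq_nil_of_invRev_eq_self (h : IsReduced L) (h' : invRev L = L) : L = [] := by
  classical
  -- `mk L` is its own inverse, and free groups are torsion-free.
  have : mk L = (mk L)⁻¹ := by rw [inv_mk, h']
  rw [← h.reduce_eq, ← toWord_mk, self_eq_inv.mp this, toWord_one]

theorem not_isRotated_invRev_append_replicate {c : α × Bool} {k : ℕ}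
    (hred : IsReduced (u ++ replicate k c)) (hu : u ≠ []) :
    ¬ (u ++ replicate k c) ~r (invRev u ++ replicate k c) := by
  rintro ⟨r, hr⟩
  have hu' : IsReduced u := hred.infix (prefix_append _ _).isInfix
  -- The rotation is `B ++ A` where `A ++ B = u ++ c^k`; a part of `u` inside `B` would be its
  -- own inverse, so `B` is a power of `c`.
  obtain ⟨i, j, rfl, hrot⟩ : ∃ i j, i + j = k ∧
      invRev u ++ replicate k c = replicate j c ++ u ++ replicate i c := by
    have hlen : 0 < (u ++ replicate k c).length := by simp [length_pos_iff.mpr hu]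
    rw [← rotate_mod, rotate_eq_drop_append_take (Nat.mod_lt _ hlen).le] at hr
    have hsplit := take_append_drop (r % (u ++ replicate k c).length) (u ++ replicate k c)
    generalize take _ _ = A at hr hsplit
    generalize drop _ _ = B at hr hsplit
    rw [← hr]
    rcases append_eq_append_iff.mp hsplit with ⟨C, rfl, rfl⟩ | ⟨C, rfl, hrep⟩
    · rw [invRev_append, append_assoc, append_assoc] at hr
      obtain ⟨hC, -⟩ := append_inj hr (invRev_length).symm
      obtain rfl := eq_nil_of_invRev_eq_self (hu'.infix (suffix_append _ _).isInfix) hC.symm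
      exact ⟨0, k, by omega, by simp⟩
    · obtain ⟨hlen, hC, hB⟩ := append_eq_replicate_iff.mp hrep.symm
      exact ⟨C.length, B.length, by omega, by rw [← hC, ← hB, append_assoc]⟩
  -- If `j > 0`, comparing first letters makes the last letter of `u` cancel against `c`.
  rcases j with _ | j
  · rw [replicate_zero, nil_append] at hrot
    exact hu (eq_nil_of_invRev_eq_self hu' (append_inj hrot invRev_length).1)
  obtain ⟨u, l, rfl⟩ := u.eq_nil_or_concat'.resolve_left hu
  have hc : c = (l.1, !l.2) := by simpa [invRev, replicate_succ] using (congrArg head? hrot).symm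
  have hlc : IsReduced [l, c] :=
    hred.infix ⟨u, replicate (i + j) c, by simp [← add_assoc, replicate_succ]⟩
  simp [hc] at hlc

theorem not_isRotated_invRev (h : IsReduced L) (hL : L ≠ []) : ¬ L ~r invRev L := by
  simpa using not_isRotated_invRev_append_replicate (k := 0) (c := L.head hL) (by simpa) hL

theorem not_isCyclicallyReduced_invRev_append_append {w : List (α × Bool)} (hw : w ≠ [])
    (X : List (α × Bool)) : ¬ IsCyclicallyReduced (invRev w ++ X ++ w) := by
  obtain ⟨w, l, rfl⟩ := w.eq_nil_or_concat'.resolve_left hw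
  intro h
  simpa [invRev] using h.2 l (by simp) (l.1, !l.2) (by simp [invRev])

theorem isReduced_invRev_append_append {g a : α × Bool} {t X : List (α × Bool)}
    (hw : IsReduced (g :: t)) (hX : IsReduced (a :: X)) (ha : a ≠ g)
    (hl : (a :: X).getLast? ≠ some (g.1, !g.2)) :
    IsReduced (invRev (g :: t) ++ (a :: X) ++ (g :: t)) := by
  obtain ⟨g₁, g₂⟩ := g
  rw [IsReduced, isChain_append, isChain_append, getLast?_append_of_ne_nil _ (cons_ne_nil a X)]
  refine ⟨⟨isReduced_invRev hw, hX, ?_⟩, hw, ?_⟩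
  · simp only [invRev, map_cons, reverse_cons, getLast?_concat, head?_cons, Option.mem_def,
      Option.some.injEq, forall_eq']
    obtain ⟨a₁, a₂⟩ := a
    rintro rfl
    cases a₂ <;> cases g₂ <;> simp_all
  · simp only [head?_cons, Option.mem_def, Option.some.injEq, forall_eq']
    rintro ⟨l₁, l₂⟩ hl' rfl
    cases l₂ <;> cases g₂ <;> simp_all

theorem mk_mem_zpowers_of_forall_fst_eq {b : α} :
    ∀ {L : List (α × Bool)}, (∀ a ∈ L, a.1 = b) → mk L ∈ Subgroup.zpowers (of b)
  | [], _ => one_eq_mk (α := α) ▸ one_mem _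
  | (a, e) :: L, h => by
    obtain rfl : a = b := h _ mem_cons_self
    rw [show mk ((a, e) :: L) = mk [(a, e)] * mk L from (mul_mk (L₁ := [_])).symm]
    refine mul_mem ?_ (mk_mem_zpowers_of_forall_fst_eq fun x hx => h x (mem_cons_of_mem _ hx))
    cases e
    · exact (Subgroup.zpowers (of a)).inv_mem (Subgroup.mem_zpowers (of a))
    · exact Subgroup.mem_zpowers (of a)

theorem isCyclicallyReduced_append_replicate {b : α} {e : Bool} {k : ℕ}
    (hred : IsReduced (u ++ replicate k (b, e))) (hhead : ∀ a ∈ u.head?, a.1 ≠ b)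
    (hk : k ≠ 0) :
    IsCyclicallyReduced (u ++ replicate k (b, e)) := by
  refine ⟨hred, fun a ha c hc hac => ?_⟩
  obtain rfl : a = (b, e) := by
    rw [getLast?_append_of_ne_nil _ (by simpa using hk)] at ha
    exact eq_of_mem_replicate (mem_of_mem_getLast? ha)
  rcases u with _ | ⟨d, u⟩
  · obtain rfl := eq_of_mem_replicate (mem_of_mem_head? hc)
    rfl
  · obtain rfl : d = c := by simpa using hc
    exact absurd hac.symm (hhead d rfl)

theorem conj_mk_cons (g : α × Bool) (X : List (α × Bool)) :
    (mk [g])⁻¹ * mk (g :: X) * mk [g] = mk (X ++ [g]) := by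
  rw [← mul_mk, show mk (g :: X) = mk [g] * mk X from (mul_mk (L₁ := [g])).symm]
  group

theorem conj_mk_concat (g : α × Bool) (X : List (α × Bool)) :
    (mk [g])⁻¹ * mk (X ++ [(g.1, !g.2)]) * mk [g] = mk ((g.1, !g.2) :: X) := by
  rw [← mul_mk, show mk ((g.1, !g.2) :: X) = mk [_] * mk X from (mul_mk (L₁ := [_])).symm,
    ← show (mk [g])⁻¹ = mk [(g.1, !g.2)] from inv_mk]
  group

variable [DecidableEq α]

/-- Conjugating by the first letter `g` of `w` either rotates `X` (when `g` cancels against an end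
of `X`), or causes no cancellation at all, and then `invRev w ++ X ++ w` is not cyclically
reduced. -/
theorem toWord_conj_isRotated {X w : List (α × Bool)} (hX : IsCyclicallyReduced X)
    (hw : IsReduced w) (hy : IsCyclicallyReduced ((mk w)⁻¹ * mk X * mk w).toWord) :
    ((mk w)⁻¹ * mk X * mk w).toWord ~r X := by
  induction w generalizing X with
  | nil => simpa [← one_eq_mk, hX.isReduced.reduce_eq] using IsRotated.refl X
  | cons g t ih =>
    have step : ∀ V, (mk [g])⁻¹ * mk X * mk [g] = mk V → IsCyclicallyReduced V → V ~r X →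
        ((mk (g :: t))⁻¹ * mk X * mk (g :: t)).toWord ~r X := by
      intro V hV hVcr hVrot
      have hconj : (mk (g :: t))⁻¹ * mk X * mk (g :: t) = (mk t)⁻¹ * mk V * mk t := by
        rw [← hV, ← singleton_append, ← mul_mk]; group
      rw [hconj] at hy ⊢
      exact (ih hVcr (hw.infix (suffix_cons g t).isInfix) hy).trans hVrot
    rcases X with _ | ⟨a, X⟩
    · simp [reduce_invRev_left_cancel]
    by_cases ha : a = g
    · subst ha
      exact step _ (conj_mk_cons a X) (isCyclicallyReduced_cons_iff.mp hX)
        (isRotated_append (l' := [a]))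
    by_cases hl : (a :: X).getLast? = some (g.1, !g.2)
    · obtain ⟨Y, hY⟩ := getLast?_eq_some_iff.mp hl
      rw [hY] at hX step ⊢
      exact step _ (conj_mk_concat g Y) (isCyclicallyReduced_cons_iff.mpr hX)
        (isRotated_append (l := [_]))
    have hred := isReduced_invRev_append_append hw hX.isReduced ha hl
    rw [inv_mk, mul_mk, mul_mk, toWord_mk, hred.reduce_eq] at hy
    exact absurd hy (not_isCyclicallyReduced_invRev_append_append (cons_ne_nil g t) _)

theorem toWord_isRotated_of_isConj {x y : FreeGroup α} (hxy : IsConj x y)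
    (hx : IsCyclicallyReduced x.toWord) (hy : IsCyclicallyReduced y.toWord) :
    x.toWord ~r y.toWord := by
  obtain ⟨c, rfl⟩ := isConj_iff.mp hxy
  have h := toWord_conj_isRotated hx (w := c⁻¹.toWord) isReduced_toWord
  rw [mk_toWord, mk_toWord, inv_inv] at h
  exact (h hy).symm

theorem exists_isConj_isCyclicallyReduced (x : FreeGroup α) :
    ∃ z, IsConj x z ∧ IsCyclicallyReduced z.toWord ∧ z.toWord.length ≤ x.toWord.length := by
  have hz := reduceCyclically.isCyclicallyReduced (isReduced_toWord (x := x))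
  have hx := reduceCyclically.conj_conjugator_reduceCyclically x.toWord
  set C := reduceCyclically.conjugator x.toWord
  set R := reduceCyclically x.toWord
  have hRw : (mk R).toWord = R := by rw [toWord_mk, hz.isReduced.reduce_eq]
  have hxm : mk C * mk R * (mk C)⁻¹ = x := by rw [inv_mk, mul_mk, mul_mk, hx, mk_toWord]
  refine ⟨mk R, (isConj_iff.mpr ⟨mk C, hxm⟩).symm, by rwa [hRw], ?_⟩
  rw [hRw]
  conv_rhs => rw [← hx]
  simp only [length_append]
  omega

theorem length_toWord_le_of_isConj {x y : FreeGroup α} (hxy : IsConj x y)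
    (hy : IsCyclicallyReduced y.toWord) : y.toWord.length ≤ x.toWord.length := by
  obtain ⟨z, hxz, hz, hlen⟩ := exists_isConj_isCyclicallyReduced x
  rwa [← (toWord_isRotated_of_isConj (hxz.symm.trans hxy) hz hy).perm.length_eq]

theorem eq_one_of_isConj_inv {x : FreeGroup α} (h : IsConj x x⁻¹) : x = 1 := by
  obtain ⟨z, hxz, hz, -⟩ := exists_isConj_isCyclicallyReduced x
  obtain ⟨c, hc⟩ := isConj_iff.mp hxz
  have hzz : IsConj z z⁻¹ := hxz.symm.trans (h.trans (isConj_iff.mpr ⟨c, by rw [← hc]; group⟩))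
  have hrot := toWord_isRotated_of_isConj hzz hz (by rw [toWord_inv]; exact hz.invRev)
  rw [toWord_inv] at hrot
  have hz1 : z = 1 :=
    toWord_eq_nil_iff.mp (by_contra fun hne => not_isRotated_invRev isReduced_toWord hne hrot)
  exact isConj_one_right.mp (hz1 ▸ hxz.symm)

theorem toWord_of_zpow (a : α) (k : ℤ) :
    (of a ^ k).toWord = replicate k.natAbs (a, decide (0 ≤ k)) := by
  cases k with
  | ofNat n => simp [toWord_of_pow]
  | negSucc n => simp [zpow_negSucc, toWord_inv, toWord_of_pow, invRev]

theorem toWord_mk_mul_of_zpow {b : α} (hu : IsReduced u) (hlast : ∀ a ∈ u.getLast?, a.1 ≠ b)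
    (k : ℤ) : (mk u * of b ^ k).toWord = u ++ replicate k.natAbs (b, decide (0 ≤ k)) := by
  rw [← mk_toWord (x := of b ^ k), mul_mk, toWord_mk, toWord_of_zpow]
  refine IsReduced.reduce_eq
    (isChain_append.mpr ⟨hu, isChain_replicate_of_rel _ fun _ => rfl, fun a ha c hc hac => ?_⟩)
  rw [eq_of_mem_replicate (mem_of_mem_head? hc)] at hac
  exact absurd hac (hlast a ha)

theorem exists_eq_zpow_mul_mk_mul_zpow {b : α} {γ : FreeGroup α}
    (hγ : γ ∉ Subgroup.zpowers (of b)) :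
    ∃ (u : List (α × Bool)) (i j : ℤ), γ = of b ^ i * mk u * of b ^ j ∧ IsReduced u ∧
      u ≠ [] ∧ (∀ a ∈ u.head?, a.1 ≠ b) ∧ ∀ a ∈ u.getLast?, a.1 ≠ b := by
  set p : α × Bool → Bool := fun a => a.1 = b
  set M := γ.toWord.dropWhile p
  set u := M.rdropWhile p
  have hsplit : γ.toWord.takeWhile p ++ u ++ M.rtakeWhile p = γ.toWord := by
    rw [append_assoc, rdropWhile_append_rtakeWhile, takeWhile_append_dropWhile]
  have hP : mk (γ.toWord.takeWhile p) ∈ Subgroup.zpowers (of b) :=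
    mk_mem_zpowers_of_forall_fst_eq fun a ha => by simpa [p] using mem_takeWhile_imp ha
  have hS : mk (M.rtakeWhile p) ∈ Subgroup.zpowers (of b) :=
    mk_mem_zpowers_of_forall_fst_eq fun a ha => by simpa [p] using mem_rtakeWhile_imp ha
  have hγ' : γ = mk (γ.toWord.takeWhile p) * mk u * mk (M.rtakeWhile p) := by
    rw [mul_mk, mul_mk, hsplit, mk_toWord]
  have hu : u ≠ [] := by
    intro hu
    rw [hγ', hu, ← one_eq_mk, mul_one] at hγ
    exact hγ (mul_mem hP hS)
  obtain ⟨i, hi⟩ := Subgroup.mem_zpowers_iff.mp hP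
  obtain ⟨j, hj⟩ := Subgroup.mem_zpowers_iff.mp hS
  refine ⟨u, i, j, by rw [hi, hj, ← hγ'],
    isReduced_toWord.infix ⟨_, _, hsplit⟩, hu, ?_, ?_⟩
  · intro a ha
    rw [head?_eq_some_head hu, Option.mem_def, Option.some.injEq] at ha
    rw [← ha, (rdropWhile_prefix (p := p) (l := M)).head hu]
    simpa [p] using head_dropWhile_not p _
  · intro a ha
    rw [getLast?_eq_some_getLast hu, Option.mem_def, Option.some.injEq] at ha
    rw [← ha]
    simpa [p] using rdropWhile_last_not p M hu

theorem not_isConj_mk_mul_zpow_inv_mul_zpow {b : α} (hu : IsReduced u) (hne : u ≠ [])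
    (hhead : ∀ a ∈ u.head?, a.1 ≠ b) (hlast : ∀ a ∈ u.getLast?, a.1 ≠ b) (s t : ℤ) :
    ¬ IsConj (mk u * of b ^ s) ((mk u)⁻¹ * of b ^ t) := by
  intro hxy
  have hhead' : ∀ a ∈ (invRev u).head?, a.1 ≠ b := by
    simpa only [head?_invRev, Option.mem_map, forall_exists_index, and_imp,
      forall_apply_eq_imp_iff₂] using hlast
  have hlast' : ∀ a ∈ (invRev u).getLast?, a.1 ≠ b := by
    simpa only [getLast?_invRev, Option.mem_map, forall_exists_index, and_imp,
      forall_apply_eq_imp_iff₂] using hhead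
  have hx := toWord_mk_mul_of_zpow hu hlast s
  have hy := toWord_mk_mul_of_zpow (isReduced_invRev hu) hlast' t
  rw [← inv_mk] at hy
  have hxcr : s ≠ 0 → IsCyclicallyReduced (mk u * of b ^ s).toWord := fun hs =>
    hx ▸ isCyclicallyReduced_append_replicate (hx ▸ isReduced_toWord) hhead (by omega)
  have hycr : t ≠ 0 → IsCyclicallyReduced ((mk u)⁻¹ * of b ^ t).toWord := fun ht =>
    hy ▸ isCyclicallyReduced_append_replicate (hy ▸ isReduced_toWord) hhead' (by omega)
  by_cases hts : t = -s
  · subst hts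
    have hinv := hxy.trans (isConj_iff.mpr ⟨of b ^ s, by group⟩ :
      IsConj (mk u * of b ^ s)⁻¹ ((mk u)⁻¹ * of b ^ (-s))).symm
    simpa [hx, hne] using congrArg toWord (eq_one_of_isConj_inv hinv)
  obtain rfl : s = t := by
    have h₁ := fun ht => length_toWord_le_of_isConj hxy (hycr ht)
    have h₂ := fun hs => length_toWord_le_of_isConj hxy.symm (hxcr hs)
    simp only [hx, hy, length_append, invRev_length, length_replicate] at h₁ h₂
    omega
  have hs : s ≠ 0 := by omega
  have hrot := toWord_isRotated_of_isConj hxy (hxcr hs) (hycr hs)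
  rw [hx, hy] at hrot
  exact not_isRotated_invRev_append_replicate (hx ▸ isReduced_toWord) hne hrot

end FreeGroup

theorem not_conj_to_inverse_gamma_general (n : ℕ)
    (γ lam : FreeGroup (Option (Fin n)))
    (hγ : γ ∉ Subgroup.zpowers (FreeGroup.of (none : Option (Fin n))))
    (hlam : lam ∈ Subgroup.zpowers (FreeGroup.of (none : Option (Fin n)))) :
    ¬ ∃ (lam' w : FreeGroup (Option (Fin n))),
      lam' ∈ Subgroup.zpowers (FreeGroup.of (none : Option (Fin n))) ∧
      (γ⁻¹ * lam').toWord = γ⁻¹.toWord ++ lam'.toWord ∧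
      w⁻¹ * (γ * lam) * w = γ⁻¹ * lam' := by
  rintro ⟨lam', w, hlam', -, hconj⟩
  obtain ⟨m, rfl⟩ := Subgroup.mem_zpowers_iff.mp hlam
  obtain ⟨m', rfl⟩ := Subgroup.mem_zpowers_iff.mp hlam'
  obtain ⟨u, i, j, rfl, hu, hne, hhead, hlast⟩ := exists_eq_zpow_mul_mk_mul_zpow hγ
  set β := of (none : Option (Fin n))
  refine not_isConj_mk_mul_zpow_inv_mul_zpow hu hne hhead hlast (j + m + i) (m' - i - j) ?_
  have h₁ : IsConj (mk u * β ^ (j + m + i)) (β ^ i * mk u * β ^ j * β ^ m) :=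
    isConj_iff.mpr ⟨β ^ i, by group⟩
  have h₂ : IsConj (β ^ i * mk u * β ^ j * β ^ m) ((β ^ i * mk u * β ^ j)⁻¹ * β ^ m') :=
    isConj_iff.mpr ⟨w⁻¹, by rw [inv_inv]; exact hconj⟩
  have h₃ : IsConj ((β ^ i * mk u * β ^ j)⁻¹ * β ^ m') ((mk u)⁻¹ * β ^ (m' - i - j)) :=
    isConj_iff.mpr ⟨β ^ j, by group⟩
  exact h₁.trans (h₂.trans h₃)

/-- Let `F` be the free group on generators `α_1,…,α_n, β` (modelled on `Option (Fin n)`,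
with `β` the generator `none`), and `B = ⟨β⟩`. If `c = γλ` is a reduced word with
`γ ∈ F ∖ B` and `λ ∈ B`, then `c` is not conjugate in `F` to any reduced word of the
form `γ⁻¹λ'` with `λ' ∈ B`. -/
theorem not_conj_to_inverse_gamma (n : ℕ)
    (γ lam : FreeGroup (Option (Fin n)))
    (hγ : γ ∉ Subgroup.zpowers (FreeGroup.of (none : Option (Fin n))))
    (hlam : lam ∈ Subgroup.zpowers (FreeGroup.of (none : Option (Fin n))))
    (hred : (γ * lam).toWord = γ.toWord ++ lam.toWord) :
    ¬ ∃ (lam' w : FreeGroup (Option (Fin n))),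
      lam' ∈ Subgroup.zpowers (FreeGroup.of (none : Option (Fin n))) ∧
      (γ⁻¹ * lam').toWord = γ⁻¹.toWord ++ lam'.toWord ∧
      w⁻¹ * (γ * lam) * w = γ⁻¹ * lam' :=
  not_conj_to_inverse_gamma_general n γ lam hγ hlam
end

section
/- Let X be an infinite set and c a word as above. For each m ≥ 1 and each finite K ⊆ X, the set V_{m,K} = {α ∈ (Sym(X))^n : every ⟨c(α)⟩-orbit of size m is contained in K} is closed in (Sym(X))^n. -/
/-- The topology of pointwise convergence on `Sym(X)`. -/
def permPtwise (X : Type*) : TopologicalSpace (Equiv.Perm X) :=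
  TopologicalSpace.induced (fun σ : Equiv.Perm X => (σ : X → X))
    (@Pi.topologicalSpace X (fun _ => X) (fun _ => ⊥))

/-- Evaluation of a word `c` in the variables `α_1,…,α_n` and a fixed permutation `β`. -/
def wordEval {X : Type*} {n : ℕ} (β : Equiv.Perm X) (c : FreeGroup (Option (Fin n)))
    (α : Fin n → Equiv.Perm X) : Equiv.Perm X :=
  FreeGroup.lift (fun o => Option.elim o β α) c

/-- The orbit of `x` under the cyclic group generated by the permutation `c(α)`. -/
def wordOrbit {X : Type*} {n : ℕ} (β : Equiv.Perm X) (c : FreeGroup (Option (Fin n)))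
    (α : Fin n → Equiv.Perm X) (x : X) : Set X :=
  {y | ∃ j : ℤ, ((wordEval β c α) ^ j) x = y}

/-!
A `c(α)`-orbit `O` of `x` of size `m ≥ 1` is finite. Since `α ↦ c(α) y` is locally constant,
`c(α')` agrees with `c(α)` on `O` for all `α'` near `α`; as `O` is `c(α)`-invariant, the inverses
agree on `O` as well, so `O` is also the `c(α')`-orbit of `x`. Thus every `α` outside `V_{m,K}`
has a neighbourhood outside `V_{m,K}`.
-/

open Topology

namespace Equiv.Perm

variable {X : Type*}

theorem zpow_apply_eq_of_forall_zpow_apply_eq {σ τ : Perm X} {x : X}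
    (h : ∀ j : ℤ, τ ((σ ^ j) x) = σ ((σ ^ j) x)) (j : ℤ) : (τ ^ j) x = (σ ^ j) x := by
  induction j using Int.induction_on with
  | zero => rfl
  | succ j ih => rw [add_comm, zpow_one_add, zpow_one_add, mul_apply, mul_apply, ih, h]
  | pred j ih =>
    apply τ.injective
    rw [h, ← mul_apply, ← mul_apply, ← zpow_one_add, ← zpow_one_add, add_sub_cancel, ih]

variable [TopologicalSpace X] [DiscreteTopology X] {T : Type*} [TopologicalSpace T]

theorem continuous_mul_apply {f g : T → Perm X} (hf : ∀ y, Continuous fun t => f t y)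
    (hg : ∀ y, Continuous fun t => g t y) (y : X) : Continuous fun t => (f t * g t) y := by
  refine continuous_iff_continuousAt.2 fun t₀ => ?_
  have hg_const : ∀ᶠ t in 𝓝 t₀, g t y = g t₀ y :=
    (hg y).continuousAt.eventually_mem ((isOpen_discrete {g t₀ y}).mem_nhds rfl)
  exact (hf (g t₀ y)).continuousAt.congr <| hg_const.mono fun t ht => by simp only [mul_apply, ht]

theorem continuous_inv_apply {f : T → Perm X} (hf : ∀ y, Continuous fun t => f t y) (y : X) :
    Continuous fun t => (f t)⁻¹ y := by
  refine continuous_discrete_rng.2 fun z => ?_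
  have hpre : (fun t => (f t)⁻¹ y) ⁻¹' {z} = (fun t => f t z) ⁻¹' {y} := by
    ext t
    simp only [Set.mem_preimage, Set.mem_singleton_iff]
    rw [inv_eq_iff_eq, eq_comm]
  rw [hpre]
  exact (hf z).isOpen_preimage _ (isOpen_discrete _)

theorem continuous_freeGroupLift_apply {ι : Type*} {g : T → ι → Perm X}
    (hg : ∀ i y, Continuous fun t => g t i y) (w : FreeGroup ι) (y : X) :
    Continuous fun t => FreeGroup.lift (g t) w y := by
  induction w using FreeGroup.induction_on generalizing y with
  | C1 => simpa using continuous_const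
  | of i => simpa using hg i y
  | inv_of i _ => simpa using continuous_inv_apply (hg i) y
  | mul a b iha ihb => simpa using continuous_mul_apply iha ihb y

end Equiv.Perm

local instance (X : Type*) : TopologicalSpace (Equiv.Perm X) := permPtwise X

section WordEval

variable {X : Type*} [TopologicalSpace X] [DiscreteTopology X] {n : ℕ}

theorem continuous_permPtwise_apply (y : X) : Continuous fun σ : Equiv.Perm X => σ y := by
  -- `permPtwise` is built from `⊥` on `X`, not from the instance
  rw [DiscreteTopology.eq_bot (α := X)]
  exact @Continuous.comp _ _ _ _ (Pi.topologicalSpace (t₂ := fun _ => ⊥)) ⊥ _ _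
    (@continuous_apply X (fun _ => X) (fun _ => ⊥) y) continuous_induced_dom

theorem continuous_wordEval_apply (β : Equiv.Perm X) (c : FreeGroup (Option (Fin n))) (y : X) :
    Continuous fun α : Fin n → Equiv.Perm X => wordEval β c α y := by
  have hgen : ∀ o z, Continuous fun α : Fin n → Equiv.Perm X => Option.elim o β α z := by
    rintro (_ | i) z
    · exact continuous_const (y := β z)
    · exact (continuous_permPtwise_apply z).comp (continuous_apply i)
  exact Equiv.Perm.continuous_freeGroupLift_apply hgen c y

theorem wordOrbit_eventually_eq {β : Equiv.Perm X} {c : FreeGroup (Option (Fin n))}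
    {α : Fin n → Equiv.Perm X} {x : X} (hfin : (wordOrbit β c α x).Finite) :
    ∀ᶠ α' in 𝓝 α, wordOrbit β c α' x = wordOrbit β c α x := by
  have hagree : ∀ᶠ α' in 𝓝 α, ∀ y ∈ wordOrbit β c α x, wordEval β c α' y = wordEval β c α y :=
    hfin.eventually_all.2 fun y _ =>
      (continuous_wordEval_apply β c y).continuousAt.eventually_mem
        ((isOpen_discrete {wordEval β c α y}).mem_nhds rfl)
  filter_upwards [hagree] with α' h
  have hzpow := Equiv.Perm.zpow_apply_eq_of_forall_zpow_apply_eq fun j => h _ ⟨j, rfl⟩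
  simp only [wordOrbit, hzpow]

end WordEval

theorem VmK_isClosed_general (X : Type*) (n m : ℕ) (hm : 1 ≤ m)
    (c : FreeGroup (Option (Fin n))) (β : Equiv.Perm X) (K : Finset X) :
    @IsClosed (Fin n → Equiv.Perm X)
      (@Pi.topologicalSpace (Fin n) (fun _ => Equiv.Perm X) (fun _ => permPtwise X))
      {α : Fin n → Equiv.Perm X |
        ∀ x : X, (wordOrbit β c α x).ncard = m → wordOrbit β c α x ⊆ ↑K} := by
  let : TopologicalSpace X := ⊥
  have : DiscreteTopology X := ⟨rfl⟩
  rw [← isOpen_compl_iff, isOpen_iff_mem_nhds]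
  intro α hα
  obtain ⟨x, hcard, hK⟩ : ∃ x, (wordOrbit β c α x).ncard = m ∧ ¬wordOrbit β c α x ⊆ ↑K := by
    simpa using hα
  have hfin : (wordOrbit β c α x).Finite := Set.finite_of_ncard_pos (by omega)
  filter_upwards [wordOrbit_eventually_eq hfin] with α' horbit hα'
  exact hK (horbit ▸ hα' x (horbit ▸ hcard))

/-- For each `m ≥ 1` and finite `K ⊆ X`, the set `V_{m,K}` of `α` such that every
`⟨c(α)⟩`-orbit of size `m` is contained in `K` is closed in `(Sym(X))^n`. -/
theorem VmK_isClosed (X : Type*) [Infinite X] (n m : ℕ) (hm : 1 ≤ m)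
    (c : FreeGroup (Option (Fin n))) (β : Equiv.Perm X) (K : Finset X) :
    @IsClosed (Fin n → Equiv.Perm X)
      (@Pi.topologicalSpace (Fin n) (fun _ => Equiv.Perm X) (fun _ => permPtwise X))
      {α : Fin n → Equiv.Perm X |
        ∀ x : X, (wordOrbit β c α x).ncard = m → wordOrbit β c α x ⊆ ↑K} :=
  VmK_isClosed_general X n m hm c β K
end
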